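/- Let G and H be graphs with odd Hadwiger numbers oh(G) = s ≥ 2 and oh(H) = t ≥ 2. Then the odd Hadwiger number of the lexicographic product satisfies oh(G ∘ H) ≥ s·t. -/

import Mathlib

open SimpleGraph

/-- `H` is an odd minor of `G`: there are pairwise vertex-disjoint subtrees of `G`, one for
each vertex of `H`, and a 2-colouring of the vertices which is proper on each tree, such that
for every edge of `H` there is a monochromatic edge of `G` between the corresponding trees. -/
def IsOddMinorOf {W V : Type*} (H : SimpleGraph W) (G : SimpleGraph V) : Prop :=
  ∃ (T : W → G.Subgraph) (c : V → Fin 2),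
    (∀ w, (T w).coe.IsTree) ∧
    (Pairwise fun w w' => Disjoint (T w).verts (T w').verts) ∧
    (∀ w, ∀ x y, (T w).Adj x y → c x ≠ c y) ∧
    (∀ w w', H.Adj w w' →
      ∃ x y, x ∈ (T w).verts ∧ y ∈ (T w').verts ∧ G.Adj x y ∧ c x = c y)

/-- The odd Hadwiger number of `G`: the largest `r` such that `K_r` is an odd minor of `G`. -/
noncomputable def oddHadwiger {V : Type*} [Fintype V] (G : SimpleGraph V) : ℕ :=
  sSup {r : ℕ | IsOddMinorOf (⊤ : SimpleGraph (Fin r)) G}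

/-- The Cartesian product `G □ H`. -/
def cartProd {α β : Type*} (G : SimpleGraph α) (H : SimpleGraph β) : SimpleGraph (α × β) where
  Adj x y := (x.1 = y.1 ∧ H.Adj x.2 y.2) ∨ (x.2 = y.2 ∧ G.Adj x.1 y.1)
  symm := by
    constructor
    rintro x y (⟨h1, h2⟩ | ⟨h1, h2⟩)
    · exact Or.inl ⟨h1.symm, h2.symm⟩
    · exact Or.inr ⟨h1.symm, h2.symm⟩
  loopless := by
    constructor
    rintro x (⟨_, h⟩ | ⟨_, h⟩)
    · exact H.irrefl h
    · exact G.irrefl h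

/-- The strong product `G ⊠ H`. -/
def strongProd {α β : Type*} (G : SimpleGraph α) (H : SimpleGraph β) : SimpleGraph (α × β) where
  Adj x y := (x.1 = y.1 ∧ H.Adj x.2 y.2) ∨ (x.2 = y.2 ∧ G.Adj x.1 y.1) ∨
    (G.Adj x.1 y.1 ∧ H.Adj x.2 y.2)
  symm := by
    constructor
    rintro x y (⟨h1, h2⟩ | ⟨h1, h2⟩ | ⟨h1, h2⟩)
    · exact Or.inl ⟨h1.symm, h2.symm⟩
    · exact Or.inr (Or.inl ⟨h1.symm, h2.symm⟩)
    · exact Or.inr (Or.inr ⟨h1.symm, h2.symm⟩)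
  loopless := by
    constructor
    rintro x (⟨_, h⟩ | ⟨_, h⟩ | ⟨h, _⟩)
    · exact H.irrefl h
    · exact G.irrefl h
    · exact G.irrefl h

/-- The lexicographic product `G ∘ H`. -/
def lexProd {α β : Type*} (G : SimpleGraph α) (H : SimpleGraph β) : SimpleGraph (α × β) where
  Adj x y := G.Adj x.1 y.1 ∨ (x.1 = y.1 ∧ H.Adj x.2 y.2)
  symm := by
    constructor
    rintro x y (h | ⟨h1, h2⟩)
    · exact Or.inl h.symm
    · exact Or.inr ⟨h1.symm, h2.symm⟩
  loopless := by
    constructor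
    rintro x (h | ⟨_, h⟩)
    · exact G.irrefl h
    · exact H.irrefl h

/-- The direct (tensor) product `G × H`. -/
def dirProd {α β : Type*} (G : SimpleGraph α) (H : SimpleGraph β) : SimpleGraph (α × β) where
  Adj x y := G.Adj x.1 y.1 ∧ H.Adj x.2 y.2
  symm := by
    constructor
    rintro x y ⟨h1, h2⟩
    exact ⟨h1.symm, h2.symm⟩
  loopless := by
    constructor
    rintro x ⟨h, _⟩
    exact G.irrefl h


/-!
Let trees `T i` with a colouring `c` witness `K_s` as an odd minor of `G`, and trees `S j` with a
colouring `d` witness `K_t` in `H`. For each pair `(i, j)` hang a copy of `S j`, attached at a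
fixed root, from every vertex of `T i`; this rooted product is a tree in `G ∘ H`. Under the
colouring `(x, u) ↦ c x + d u` (mod 2) an edge inside a fibre changes only the `d`-summand and an
edge between roots only the `c`-summand, so each of these trees is properly coloured, and a
monochromatic edge between `T i` and `T i'` (respectively `S j` and `S j'`) gives a monochromatic
edge between the branch sets of `(i, j)` and `(i', j')`.
-/

namespace SimpleGraph

variable {V V' α β : Type*}

theorem Reachable.lift {G : SimpleGraph V} {G' : SimpleGraph V'} (f : V → V')
    (hf : ∀ ⦃a b⦄, G.Adj a b → G'.Reachable (f a) (f b)) {u v : V} (h : G.Reachable u v) :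
    G'.Reachable (f u) (f v) := by
  rw [reachable_iff_reflTransGen] at h ⊢
  exact Relation.ReflTransGen.lift' f (fun a b hab => (reachable_iff_reflTransGen _ _).mp (hf hab))
    _ _ h

theorem IsBridge.of_map {G : SimpleGraph V} {G' : SimpleGraph V'} (f : V → V') {v w : V}
    (hf : ∀ ⦃a b⦄, G.Adj a b → s(a, b) ≠ s(v, w) →
      (G'.deleteEdges {s(f v, f w)}).Reachable (f a) (f b))
    (h : G'.IsBridge s(f v, f w)) : G.IsBridge s(v, w) := by
  rw [isBridge_iff] at h ⊢
  refine fun hvw => h (hvw.lift f fun a b hab => ?_)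
  rw [deleteEdges_adj, Set.mem_singleton_iff] at hab
  exact hf hab.1 hab.2

/-- The rooted product of Godsil and McKay: a copy of `H` hangs from every vertex `a` of `G`,
attached at its root `(a, b₀)`. -/
def rootedProd (G : SimpleGraph α) (H : SimpleGraph β) (b₀ : β) : SimpleGraph (α × β) where
  Adj p q := (p.1 = q.1 ∧ H.Adj p.2 q.2) ∨ (p.2 = b₀ ∧ q.2 = b₀ ∧ G.Adj p.1 q.1)
  symm := by
    constructor
    rintro p q (⟨h₁, h₂⟩ | ⟨h₁, h₂, h₃⟩)
    · exact Or.inl ⟨h₁.symm, h₂.symm⟩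
    · exact Or.inr ⟨h₂, h₁, h₃.symm⟩
  loopless := by
    constructor
    rintro p (⟨-, h⟩ | ⟨-, -, h⟩)
    · exact H.irrefl h
    · exact G.irrefl h

variable {G : SimpleGraph α} {H : SimpleGraph β}

theorem Connected.rootedProd (hG : G.Connected) (hH : H.Preconnected) (b₀ : β) :
    (G.rootedProd H b₀).Connected := by
  have hfibre (a : α) (b b' : β) : (G.rootedProd H b₀).Reachable (a, b) (a, b') :=
    (hH b b').map ⟨fun b => (a, b), fun h => Or.inl ⟨rfl, h⟩⟩
  have hroots (a a' : α) : (G.rootedProd H b₀).Reachable (a, b₀) (a', b₀) :=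
    (hG.preconnected a a').map ⟨fun a => (a, b₀), fun h => Or.inr ⟨rfl, rfl, h⟩⟩
  have : Nonempty (α × β) := ⟨(hG.nonempty.some, b₀)⟩
  exact ⟨fun p q => ((hfibre _ _ _).trans (hroots _ _)).trans (hfibre _ _ _)⟩

theorem IsAcyclic.rootedProd (hG : G.IsAcyclic) (hH : H.IsAcyclic) (b₀ : β) :
    (G.rootedProd H b₀).IsAcyclic := by
  classical
  rw [isAcyclic_iff_forall_adj_isBridge] at hG hH ⊢
  rintro ⟨a, b⟩ ⟨a', b'⟩ (⟨rfl, hbb'⟩ | ⟨rfl, rfl, haa'⟩)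
  · refine IsBridge.of_map (fun p => if p.1 = a then p.2 else b₀) ?_ (by simpa using hH hbb')
    rintro ⟨x, y⟩ ⟨x', y'⟩ (⟨rfl, hyy'⟩ | ⟨rfl, rfl, -⟩) hne
    · by_cases hx : x = a
      · subst hx
        simp only [if_true]
        exact Adj.reachable (by simp_all)
      · simp [hx]
    · simp
  · refine IsBridge.of_map Prod.fst ?_ (hG haa')
    rintro ⟨x, y⟩ ⟨x', y'⟩ (⟨rfl, -⟩ | ⟨rfl, rfl, hxx'⟩) hne
    · rfl
    · exact Adj.reachable (by simp_all)

theorem IsTree.rootedProd (hG : G.IsTree) (hH : H.IsTree) (b₀ : β) :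
    (G.rootedProd H b₀).IsTree :=
  ⟨hG.connected.rootedProd hH.connected.preconnected b₀,
    hG.isAcyclic.rootedProd hH.isAcyclic b₀⟩

namespace Subgraph

def lexRootedProd (A : G.Subgraph) (B : H.Subgraph) (b₀ : B.verts) :
    (lexProd G H).Subgraph where
  verts := A.verts ×ˢ B.verts
  Adj p q :=
    (p.1 = q.1 ∧ p.1 ∈ A.verts ∧ B.Adj p.2 q.2) ∨ (p.2 = b₀ ∧ q.2 = b₀ ∧ A.Adj p.1 q.1)
  adj_sub := by
    rintro p q (⟨h₁, -, h₂⟩ | ⟨-, -, h⟩)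
    · exact Or.inr ⟨h₁, B.adj_sub h₂⟩
    · exact Or.inl (A.adj_sub h)
  edge_vert := by
    rintro p q (⟨-, h₁, h₂⟩ | ⟨h₁, -, h₂⟩)
    · exact ⟨h₁, B.edge_vert h₂⟩
    · exact ⟨A.edge_vert h₂, h₁ ▸ b₀.2⟩
  symm := by
    constructor
    rintro p q (⟨h₁, h₂, h₃⟩ | ⟨h₁, h₂, h₃⟩)
    · exact Or.inl ⟨h₁.symm, h₁ ▸ h₂, h₃.symm⟩
    · exact Or.inr ⟨h₂, h₁, h₃.symm⟩

def coeLexRootedProdIso (A : G.Subgraph) (B : H.Subgraph) (b₀ : B.verts) :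
    (A.lexRootedProd B b₀).coe ≃g A.coe.rootedProd B.coe b₀ where
  toEquiv := Equiv.Set.prod A.verts B.verts
  map_rel_iff' := by
    rintro ⟨⟨x, u⟩, hx, hu⟩ ⟨⟨x', u'⟩, hx', hu'⟩
    change ((⟨x, hx⟩ : A.verts) = ⟨x', hx'⟩ ∧ B.Adj u u') ∨
        ((⟨u, hu⟩ : B.verts) = b₀ ∧ (⟨u', hu'⟩ : B.verts) = b₀ ∧ A.Adj x x') ↔
      (x = x' ∧ x ∈ A.verts ∧ B.Adj u u') ∨ (u = b₀ ∧ u' = b₀ ∧ A.Adj x x')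
    simp only [Subtype.ext_iff, hx, true_and]

theorem lexRootedProd_coe_isTree {A : G.Subgraph} {B : H.Subgraph} (hA : A.coe.IsTree)
    (hB : B.coe.IsTree) (b₀ : B.verts) : (A.lexRootedProd B b₀).coe.IsTree :=
  (coeLexRootedProdIso A B b₀).isTree_iff.mpr (hA.rootedProd hB b₀)

end Subgraph

end SimpleGraph

theorem lexProd_top_top {α β : Type*} :
    lexProd (⊤ : SimpleGraph α) (⊤ : SimpleGraph β) = ⊤ := by
  ext p q
  simp only [lexProd, top_adj, ne_eq, Prod.ext_iff]
  tauto

namespace IsOddMinorOf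

variable {U V W : Type*} {G : SimpleGraph V}

theorem of_copy {F : SimpleGraph U} {H : SimpleGraph W} (f : F.Copy H) (h : IsOddMinorOf H G) :
    IsOddMinorOf F G := by
  obtain ⟨T, c, htree, hdisj, hproper, hedge⟩ := h
  exact ⟨T ∘ f, c, fun u => htree (f u), fun u u' huu' => hdisj (f.injective.ne huu'),
    fun u => hproper (f u), fun u u' huu' => hedge _ _ (f.toHom.map_adj huu')⟩

theorem natCard_le [Finite V] {H : SimpleGraph W} (h : IsOddMinorOf H G) :
    Nat.card W ≤ Nat.card V := by
  obtain ⟨T, -, htree, hdisj, -, -⟩ := h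
  let x (w : W) : (T w).verts := (htree w).connected.nonempty.some
  refine Nat.card_le_card_of_injective (fun w => (x w : V)) fun w w' hww' => ?_
  by_contra hne
  have hmem : (x w : V) ∈ (T w').verts := by
    rw [show (x w : V) = x w' from hww']
    exact (x w').2
  exact Set.disjoint_left.mp (hdisj hne) (x w).2 hmem

theorem of_isEmpty [IsEmpty W] (H : SimpleGraph W) (G : SimpleGraph V) : IsOddMinorOf H G :=
  ⟨isEmptyElim, fun _ => 0, isEmptyElim, fun w => isEmptyElim w, isEmptyElim,
    fun w => isEmptyElim w⟩

theorem lexProd_top {ι κ : Type*} {F : SimpleGraph ι} {H : SimpleGraph W}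
    (hF : IsOddMinorOf F G) (hK : IsOddMinorOf (⊤ : SimpleGraph κ) H) :
    IsOddMinorOf (lexProd F (⊤ : SimpleGraph κ)) (lexProd G H) := by
  obtain ⟨T, c, hTtree, hTdisj, hTproper, hTedge⟩ := hF
  obtain ⟨S, d, hStree, hSdisj, hSproper, hSedge⟩ := hK
  let x₀ (i : ι) : (T i).verts := (hTtree i).connected.nonempty.some
  let u₀ (j : κ) : (S j).verts := (hStree j).connected.nonempty.some
  refine ⟨fun p => (T p.1).lexRootedProd (S p.2) (u₀ p.2), fun z => c z.1 + d z.2,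
    fun p => Subgraph.lexRootedProd_coe_isTree (hTtree p.1) (hStree p.2) _, ?_, ?_, ?_⟩
  · rintro ⟨i, j⟩ ⟨i', j'⟩ hne
    refine Set.disjoint_prod.mpr ?_
    by_cases hi : i = i'
    · subst hi
      exact Or.inr (hSdisj fun hj => hne (Prod.ext rfl hj))
    · exact Or.inl (hTdisj hi)
  · rintro p ⟨x, u⟩ ⟨x', u'⟩ (⟨rfl, -, hadj⟩ | ⟨rfl, rfl, hadj⟩) hc
    · exact hSproper _ _ _ hadj (add_left_cancel hc)
    · exact hTproper _ _ _ hadj (add_right_cancel hc)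
  · rintro ⟨i, j⟩ ⟨i', j'⟩ (hii' | ⟨rfl, hjj'⟩)
    · obtain ⟨x, y, hx, hy, hxy, hcxy⟩ := hTedge i i' hii'
      obtain ⟨u, v, hu, hv, hduv⟩ :
          ∃ u v, u ∈ (S j).verts ∧ v ∈ (S j').verts ∧ d u = d v := by
        by_cases hj : j = j'
        · subst hj
          exact ⟨u₀ j, u₀ j, (u₀ j).2, (u₀ j).2, rfl⟩
        · obtain ⟨u, v, hu, hv, -, hduv⟩ := hSedge j j' hj
          exact ⟨u, v, hu, hv, hduv⟩
      exact ⟨(x, u), (y, v), ⟨hx, hu⟩, ⟨hy, hv⟩, Or.inl hxy, by simp [hcxy, hduv]⟩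
    · obtain ⟨u, v, hu, hv, huv, hduv⟩ := hSedge j j' hjj'
      exact ⟨(x₀ i, u), (x₀ i, v), ⟨(x₀ i).2, hu⟩, ⟨(x₀ i).2, hv⟩, Or.inr ⟨rfl, huv⟩,
        by simp [hduv]⟩

end IsOddMinorOf

section OddHadwiger

variable {V : Type*} {G : SimpleGraph V}

theorem bddAbove_setOf_isOddMinorOf_top [Finite V] :
    BddAbove {r : ℕ | IsOddMinorOf (⊤ : SimpleGraph (Fin r)) G} :=
  ⟨Nat.card V, fun _ hr => by simpa using hr.natCard_le⟩

variable [Fintype V]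

theorem isOddMinorOf_top_oddHadwiger (G : SimpleGraph V) :
    IsOddMinorOf (⊤ : SimpleGraph (Fin (oddHadwiger G))) G :=
  Nat.sSup_mem ⟨0, .of_isEmpty _ G⟩ bddAbove_setOf_isOddMinorOf_top

theorem IsOddMinorOf.le_oddHadwiger {r : ℕ} (h : IsOddMinorOf (⊤ : SimpleGraph (Fin r)) G) :
    r ≤ oddHadwiger G :=
  le_csSup bddAbove_setOf_isOddMinorOf_top h

end OddHadwiger

theorem stmt_4_general {V W : Type*} [Fintype V] [Fintype W]
    (G : SimpleGraph V) (H : SimpleGraph W) (s t : ℕ)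
    (hs : oddHadwiger G = s)
    (ht : oddHadwiger H = t) :
    oddHadwiger (lexProd G H) ≥ s * t := by
  subst hs ht
  have hprod :=
    (isOddMinorOf_top_oddHadwiger G).lexProd_top (isOddMinorOf_top_oddHadwiger H)
  rw [lexProd_top_top] at hprod
  exact (hprod.of_copy (Iso.completeGraph finProdFinEquiv.symm).toCopy).le_oddHadwiger

theorem stmt_4 {V W : Type*} [Fintype V] [Fintype W]
    (G : SimpleGraph V) (H : SimpleGraph W) (s t : ℕ)
    (hs : oddHadwiger G = s) (hs2 : 2 ≤ s)
    (ht : oddHadwiger H = t) (ht2 : 2 ≤ t) :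
    oddHadwiger (lexProd G H) ≥ s * t :=
  stmt_4_general G H s t hs ht
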